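/- If E ⊆ ℝⁿ is a convex body and e is a unit vector, then the marginal w_e(x) = ∫_ℝ 1_E(x + t e) dt, defined on the hyperplane e^⊥, is log-concave, i.e. w_e(λx + (1−λ)y) ≥ w_e(x)^λ w_e(y)^(1−λ) for all x, y ∈ e^⊥ and λ ∈ [0,1]. -/

import Mathlib

/-! Every slice of `E` by a line in direction `e` is a convex bounded subset of `ℝ`, and the slice
through `λx + (1-λ)y` contains the Minkowski combination of the slices through `x` and `y`.
In `ℝ` the length of a Minkowski sum is the sum of the lengths (one-dimensional Brunn–Minkowski),
so the marginal is concave where it is positive, and the weighted AM–GM inequality turns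
concavity into log-concavity. -/

open MeasureTheory Set

/-- The marginal of a set `E ⊆ ℝⁿ` in direction `e`, evaluated at `x`:
the one-dimensional Lebesgue measure of the slice `{t : x + t e ∈ E}`. -/
noncomputable def marginal {n : ℕ} (E : Set (EuclideanSpace ℝ (Fin n)))
    (e : EuclideanSpace ℝ (Fin n)) (x : EuclideanSpace ℝ (Fin n)) : ℝ :=
  (volume {t : ℝ | x + t • e ∈ E}).toReal

open Bornology Metric
open scoped Pointwise

section LineSlice

variable {V : Type*} [AddCommGroup V] [Module ℝ V]

def lineSlice (E : Set V) (e x : V) : Set ℝ :=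
  {t : ℝ | x + t • e ∈ E}

variable {E : Set V}

theorem Convex.smul_lineSlice_add_smul_lineSlice_subset (hE : Convex ℝ E) (e x y : V)
    {a b : ℝ} (ha : 0 ≤ a) (hb : 0 ≤ b) (hab : a + b = 1) :
    a • lineSlice E e x + b • lineSlice E e y ⊆ lineSlice E e (a • x + b • y) := by
  rintro _ ⟨_, ⟨s, hs, rfl⟩, _, ⟨t, ht, rfl⟩, rfl⟩
  show a • x + b • y + (a * s + b * t) • e ∈ E
  convert hE hs ht ha hb hab using 1
  module

theorem Convex.lineSlice (hE : Convex ℝ E) (e x : V) : Convex ℝ (lineSlice E e x) :=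
  convex_iff_pointwise_add_subset.2 fun _ _ ha hb hab => by
    simpa only [Convex.combo_self hab] using
      hE.smul_lineSlice_add_smul_lineSlice_subset e x x ha hb hab

end LineSlice

theorem Bornology.IsBounded.lineSlice {V : Type*} [NormedAddCommGroup V] [NormedSpace ℝ V]
    {E : Set V} (hE : IsBounded E) {e : V} (he : e ≠ 0) (x : V) :
    IsBounded (lineSlice E e x) := by
  obtain ⟨R, hR⟩ := isBounded_iff_forall_norm_le.1 hE
  refine isBounded_iff_forall_norm_le.2 ⟨(R + ‖x‖) / ‖e‖, fun t ht => ?_⟩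
  rw [le_div_iff₀ (norm_pos_iff.2 he), ← norm_smul]
  calc ‖t • e‖ = ‖(x + t • e) - x‖ := by rw [add_sub_cancel_left]
    _ ≤ ‖x + t • e‖ + ‖x‖ := norm_sub_le _ _
    _ ≤ R + ‖x‖ := by gcongr; exact hR _ ht

namespace Real

theorem diam_add {s t : Set ℝ} (hs : IsBounded s) (ht : IsBounded t) (hs₀ : s.Nonempty)
    (ht₀ : t.Nonempty) : diam (s + t) = diam s + diam t := by
  rw [diam_eq hs, diam_eq ht, diam_eq (hs.add ht), csSup_add hs₀ hs.bddAbove ht₀ ht.bddAbove,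
    csInf_add hs₀ hs.bddBelow ht₀ ht.bddBelow]
  ring

theorem toReal_volume_le_diam {s : Set ℝ} (hs : IsBounded s) : (volume s).toReal ≤ diam s :=
  ENNReal.toReal_mono hs.ediam_ne_top (volume_le_diam s)

theorem _root_.Convex.toReal_volume_eq_diam {s : Set ℝ} (hs : Convex ℝ s) (hb : IsBounded s) :
    (volume s).toReal = diam s := by
  refine le_antisymm (toReal_volume_le_diam hb) ?_
  rcases s.eq_empty_or_nonempty with rfl | hne
  · simp
  calc diam s = (volume (Ioo (sInf s) (sSup s))).toReal := by
        rw [volume_Ioo, ENNReal.toReal_ofReal (sub_nonneg.2 (csInf_le_csSup hne hb.bddBelow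
          hb.bddAbove)), diam_eq hb]
    _ ≤ (volume s).toReal := ENNReal.toReal_mono hb.measure_lt_top.ne <| measure_mono <|
        (hs.isConnected hne).Ioo_csInf_csSup_subset hb.bddBelow hb.bddAbove

theorem smul_toReal_volume_add_smul_le {s t u : Set ℝ} (hs : IsBounded s) (ht : IsBounded t)
    (hs₀ : s.Nonempty) (ht₀ : t.Nonempty) (hu : Convex ℝ u) (hub : IsBounded u) {a b : ℝ}
    (ha : 0 ≤ a) (hb : 0 ≤ b) (hsub : a • s + b • t ⊆ u) :
    a * (volume s).toReal + b * (volume t).toReal ≤ (volume u).toReal :=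
  calc a * (volume s).toReal + b * (volume t).toReal ≤ a * diam s + b * diam t := by
        gcongr <;> exact toReal_volume_le_diam ‹_›
    _ = diam (a • s + b • t) := by
        rw [diam_add (hs.smul₀ a) (ht.smul₀ b) hs₀.smul_set ht₀.smul_set, diam_smul₀,
          diam_smul₀, norm_of_nonneg ha, norm_of_nonneg hb]
    _ ≤ diam u := diam_mono hsub hub
    _ = (volume u).toReal := (hu.toReal_volume_eq_diam hub).symm

end Real

section Marginal

variable {n : ℕ} {E : Set (EuclideanSpace ℝ (Fin n))} {e : EuclideanSpace ℝ (Fin n)}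

theorem lineSlice_nonempty_of_marginal_ne_zero {x : EuclideanSpace ℝ (Fin n)}
    (hx : marginal E e x ≠ 0) : (lineSlice E e x).Nonempty :=
  nonempty_of_measure_ne_zero (ENNReal.toReal_ne_zero.1 hx).1

theorem smul_marginal_add_smul_marginal_le (hEb : IsBounded E) (hEc : Convex ℝ E) (he : e ≠ 0)
    {x y : EuclideanSpace ℝ (Fin n)} (hx : (lineSlice E e x).Nonempty)
    (hy : (lineSlice E e y).Nonempty) {a b : ℝ} (ha : 0 ≤ a) (hb : 0 ≤ b) (hab : a + b = 1) :
    a * marginal E e x + b * marginal E e y ≤ marginal E e (a • x + b • y) :=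
  Real.smul_toReal_volume_add_smul_le (hEb.lineSlice he x) (hEb.lineSlice he y) hx hy
    (hEc.lineSlice e _) (hEb.lineSlice he _) ha hb
    (hEc.smul_lineSlice_add_smul_lineSlice_subset e x y ha hb hab)

end Marginal

theorem marginal_logConcave_of_convex_general {n : ℕ}
    (E : Set (EuclideanSpace ℝ (Fin n))) (hEb : Bornology.IsBounded E)
    (hEc : Convex ℝ E)
    (e : EuclideanSpace ℝ (Fin n)) (he : ‖e‖ = 1)
    (x y : EuclideanSpace ℝ (Fin n))
    (lam : ℝ) (hlam0 : 0 ≤ lam) (hlam1 : lam ≤ 1) :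
    marginal E e (lam • x + (1 - lam) • y) ≥
      (marginal E e x) ^ lam * (marginal E e y) ^ (1 - lam) := by
  rcases hlam0.eq_or_lt with rfl | hlam_pos
  · simp
  rcases hlam1.eq_or_lt with rfl | hlam_lt
  · simp
  rcases eq_or_ne (marginal E e x) 0 with hx | hx
  · rw [hx, Real.zero_rpow hlam_pos.ne', zero_mul]
    exact ENNReal.toReal_nonneg
  rcases eq_or_ne (marginal E e y) 0 with hy | hy
  · rw [hy, Real.zero_rpow (sub_pos.2 hlam_lt).ne', mul_zero]
    exact ENNReal.toReal_nonneg
  calc (marginal E e x) ^ lam * (marginal E e y) ^ (1 - lam)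
      ≤ lam * marginal E e x + (1 - lam) * marginal E e y :=
        Real.geom_mean_le_arith_mean2_weighted hlam0 (sub_nonneg.2 hlam1)
          ENNReal.toReal_nonneg ENNReal.toReal_nonneg (add_sub_cancel lam 1)
    _ ≤ marginal E e (lam • x + (1 - lam) • y) :=
        smul_marginal_add_smul_marginal_le hEb hEc (norm_ne_zero_iff.1 (he ▸ one_ne_zero))
          (lineSlice_nonempty_of_marginal_ne_zero hx) (lineSlice_nonempty_of_marginal_ne_zero hy)
          hlam0 (sub_nonneg.2 hlam1) (add_sub_cancel lam 1)

/-- If `E ⊆ ℝⁿ` is a convex body (bounded convex set with nonempty interior) and `e` is a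
unit vector, then the marginal `w_e` is log-concave on the hyperplane `e^⊥`. -/
theorem marginal_logConcave_of_convex {n : ℕ}
    (E : Set (EuclideanSpace ℝ (Fin n))) (hEb : Bornology.IsBounded E)
    (hEc : Convex ℝ E) (hEi : (interior E).Nonempty)
    (e : EuclideanSpace ℝ (Fin n)) (he : ‖e‖ = 1)
    (x y : EuclideanSpace ℝ (Fin n)) (hx : inner ℝ e x = (0 : ℝ)) (hy : inner ℝ e y = (0 : ℝ))
    (lam : ℝ) (hlam0 : 0 ≤ lam) (hlam1 : lam ≤ 1) :
    marginal E e (lam • x + (1 - lam) • y) ≥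
      (marginal E e x) ^ lam * (marginal E e y) ^ (1 - lam) :=
  marginal_logConcave_of_convex_general E hEb hEc e he x y lam hlam0 hlam1
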